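/- arXiv:1801.06818 — 2 statements merged into one kernel-verified Lean document; each statement's English description precedes it below -/
import Mathlib

section
/- Let ρ be a probability distribution on [r], and for each u ∈ [r] let q_{u,·} be a subprobability vector on [J]. Then d_TV( sel(Σ_u ρ_u q_{u,·}), Σ_u ρ_u sel^{*m}(q_{u,·}/m) ) ≤ Σ_u ρ_u (Σ_j q_{u,j})², where sel^{*m} denotes the m-fold convolution of sel. -/
/-- The selector distribution `sel(p)` on `ℤ₊^J`: mass `p j` on the standard basis vector
`e_j`, and mass `1 - ∑ j, p j` on the zero vector. -/
noncomputable def sel {J : ℕ} (p : Fin J → ℝ) (x : Fin J → ℕ) : ℝ :=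
  (if x = 0 then 1 - ∑ j, p j else 0) + ∑ j, if x = Pi.single j 1 then p j else 0

/-- Convolution of two mass functions on `ℤ₊^J`. -/
noncomputable def convOn {J : ℕ} (a b : (Fin J → ℕ) → ℝ) (x : Fin J → ℕ) : ℝ :=
  ∑' y : Fin J → ℕ, ∑' z : Fin J → ℕ, if y + z = x then a y * b z else 0

/-- `sel^{*k}(p)`: the `k`-fold convolution of `sel(p)` (distribution of the sum of `k`
i.i.d. `sel(p)` random vectors). -/
noncomputable def selPow {J : ℕ} (p : Fin J → ℝ) : ℕ → (Fin J → ℕ) → ℝ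
  | 0 => fun x => if x = 0 then 1 else 0
  | k + 1 => convOn (selPow p k) (sel p)

/-!
Total variation is jointly convex and `sel` is affine in its parameter, so it suffices to treat
a single subprobability vector `p` with total mass `s`. Both `sel p` and `sel^{*m}(p/m)` are
probability distributions, so their distance is the positive part of `sel p - sel^{*m}(p/m)`,
which lives on the support `{0, e_j}` of `sel p`. By Bernoulli's inequality `sel^{*m}(p/m)`
puts mass `(1 - s/m)^m ≥ 1 - s` on `0` and `p_j (1 - s/m)^(m-1) ≥ p_j (1 - s)` on `e_j`, so the
positive part is at most `∑_j p_j s = s²`.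
-/

open Finset Function
open scoped Pointwise

lemma one_sub_le_one_sub_div_pow {s : ℝ} {m n : ℕ} (hs : 0 ≤ s) (hsm : s ≤ m) (hn : n ≤ m) :
    1 - s ≤ (1 - s / m) ^ n := by
  have hdiv : s / m ≤ 1 := div_le_one_of_le₀ hsm m.cast_nonneg
  have hmul : n * (s / m) ≤ s := by
    rcases Nat.eq_zero_or_pos m with rfl | hm
    · simp [hs]
    · calc n * (s / m) ≤ m * (s / m) := by gcongr
        _ = s := mul_div_cancel₀ s (by positivity)
  calc 1 - s ≤ 1 + n * -(s / m) := by linarith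
    _ ≤ (1 + -(s / m)) ^ n := one_add_mul_le_pow (by linarith) n
    _ = (1 - s / m) ^ n := by rw [← sub_eq_add_neg]

lemma tsum_abs_sub_eq_two_mul_tsum_posPart {ι : Type*} {f g : ι → ℝ} (hf : Summable f)
    (hg : Summable g) (h : ∑' i, f i = ∑' i, g i) :
    ∑' i, |f i - g i| = 2 * ∑' i, (f i - g i)⁺ := by
  have hd : Summable fun i => f i - g i := hf.sub hg
  calc ∑' i, |f i - g i| = ∑' i, |f i - g i| + ∑' i, (f i - g i) := by
        rw [hf.tsum_sub hg, h, sub_self, add_zero]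
    _ = ∑' i, (|f i - g i| + (f i - g i)) := (hd.abs.tsum_add hd).symm
    _ = 2 * ∑' i, (f i - g i)⁺ := by
        simp_rw [abs_add_eq_two_nsmul_posPart, nsmul_eq_mul, Nat.cast_ofNat, tsum_mul_left]

lemma tsum_abs_sum_mul_le {ι κ : Type*} (s : Finset κ) {ρ : κ → ℝ} (hρ : ∀ u ∈ s, 0 ≤ ρ u)
    {d : κ → ι → ℝ} (hd : ∀ u ∈ s, Summable (d u)) :
    ∑' i, |∑ u ∈ s, ρ u * d u i| ≤ ∑ u ∈ s, ρ u * ∑' i, |d u i| := by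
  have hsum : ∀ u ∈ s, Summable fun i => ρ u * |d u i| := fun u hu => (hd u hu).abs.mul_left _
  calc ∑' i, |∑ u ∈ s, ρ u * d u i| ≤ ∑' i, ∑ u ∈ s, ρ u * |d u i| := by
        refine Summable.tsum_le_tsum (fun i => ?_)
          (summable_sum fun u hu => (hd u hu).mul_left (ρ u)).abs (summable_sum hsum)
        refine (abs_sum_le_sum_abs _ _).trans (sum_le_sum fun u hu => ?_)
        rw [abs_mul, abs_of_nonneg (hρ u hu)]
    _ = ∑ u ∈ s, ρ u * ∑' i, |d u i| := by
        rw [Summable.tsum_finsetSum hsum]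
        simp_rw [tsum_mul_left]

section Sel

variable {J : ℕ}

lemma single_one_ne_zero (j : Fin J) : (Pi.single j 1 : Fin J → ℕ) ≠ 0 := by
  simp [Pi.single_eq_zero_iff]

lemma single_one_injective : Injective fun j : Fin J => (Pi.single j 1 : Fin J → ℕ) := by
  intro j k h
  by_contra hjk
  simpa [Pi.single_apply, hjk] using congrFun h j

lemma add_eq_single_one_iff {y z : Fin J → ℕ} {j : Fin J} :
    y + z = Pi.single j 1 ↔ y = 0 ∧ z = Pi.single j 1 ∨ y = Pi.single j 1 ∧ z = 0 := by
  constructor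
  · intro h
    have hoff : ∀ i, i ≠ j → y i = 0 ∧ z i = 0 := fun i hi => by
      simpa [Pi.single_apply, hi] using congrFun h i
    have hj : y j + z j = 1 := by simpa using congrFun h j
    rcases Nat.add_eq_one_iff.mp hj with ⟨hy, hz⟩ | ⟨hy, hz⟩ <;>
    [left; right] <;>
    constructor <;> funext i <;> by_cases hi : i = j <;> simp_all
  · rintro (⟨rfl, rfl⟩ | ⟨rfl, rfl⟩) <;> simp

def selSupport (J : ℕ) : Finset (Fin J → ℕ) :=
  insert 0 (univ.image fun j => Pi.single j 1)

lemma sum_selSupport {M : Type*} [AddCommMonoid M] (f : (Fin J → ℕ) → M) :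
    ∑ x ∈ selSupport J, f x = f 0 + ∑ j, f (Pi.single j 1) := by
  rw [selSupport, sum_insert, sum_image single_one_injective.injOn]
  simp

lemma support_sel_subset (p : Fin J → ℝ) : support (sel p) ⊆ selSupport J := by
  intro x hx
  by_contra hmem
  simp only [selSupport, coe_insert, coe_image, coe_univ, Set.image_univ, Set.mem_insert_iff,
    Set.mem_range, not_or, not_exists] at hmem
  exact hx (by simp [sel, hmem.1, fun j => Ne.symm (hmem.2 j)])

lemma finite_support_sel (p : Fin J → ℝ) : (support (sel p)).Finite :=
  (selSupport J).finite_toSet.subset (support_sel_subset p)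

lemma sel_zero (p : Fin J → ℝ) : sel p 0 = 1 - ∑ j, p j := by
  simp [sel, fun j => (single_one_ne_zero j).symm]

lemma sel_single (p : Fin J → ℝ) (j : Fin J) : sel p (Pi.single j 1) = p j := by
  simp [sel, single_one_injective.eq_iff]

lemma sel_nonneg {p : Fin J → ℝ} (hp : ∀ j, 0 ≤ p j) (hs : ∑ j, p j ≤ 1) (x : Fin J → ℕ) :
    0 ≤ sel p x := by
  unfold sel
  refine add_nonneg ?_ (sum_nonneg fun j _ => ?_)
  · split_ifs <;> linarith
  · split_ifs <;> linarith [hp j]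

lemma tsum_sel (p : Fin J → ℝ) : ∑' x, sel p x = 1 := by
  rw [tsum_eq_sum' (support_sel_subset p), sum_selSupport, sel_zero]
  simp [sel_single]

lemma sel_mixture {r : ℕ} {ρ : Fin r → ℝ} (hρ : ∑ u, ρ u = 1) (q : Fin r → Fin J → ℝ)
    (x : Fin J → ℕ) : sel (fun j => ∑ u, ρ u * q u j) x = ∑ u, ρ u * sel (q u) x := by
  simp only [sel, mul_add, sum_add_distrib, mul_sum, mul_ite, mul_zero]
  congr 1
  · split_ifs
    · simp only [mul_sub, mul_one, sum_sub_distrib, hρ, mul_sum]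
      rw [sum_comm]
    · simp
  · rw [sum_comm]
    exact sum_congr rfl fun j _ => by split_ifs <;> simp

end Sel

section Conv

variable {J : ℕ} {a b : (Fin J → ℕ) → ℝ}

lemma convOn_eq_sum {A B : Finset (Fin J → ℕ)} {x : Fin J → ℕ}
    (hAB : ∀ y z, y + z = x → a y * b z ≠ 0 → y ∈ A ∧ z ∈ B) :
    convOn a b x = ∑ y ∈ A, ∑ z ∈ B, if y + z = x then a y * b z else 0 := by
  rw [convOn, tsum_eq_sum fun y hy => ?_]
  · refine sum_congr rfl fun y _ => tsum_eq_sum fun z hz => ?_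
    split_ifs with h
    · by_contra hne
      exact hz (hAB y z h hne).2
    · rfl
  · refine (tsum_congr fun z => ?_).trans tsum_zero
    split_ifs with h
    · by_contra hne
      exact hy (hAB y z h hne).1
    · rfl

lemma convOn_zero : convOn a b 0 = a 0 * b 0 := by
  rw [convOn_eq_sum (A := {0}) (B := {0})]
  · simp
  · intro y z h _
    simpa using add_eq_zero.mp h

lemma convOn_single (j : Fin J) :
    convOn a b (Pi.single j 1) = a 0 * b (Pi.single j 1) + a (Pi.single j 1) * b 0 := by
  rw [convOn_eq_sum (A := {0, Pi.single j 1}) (B := {0, Pi.single j 1})]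
  · simp [sum_pair (single_one_ne_zero j).symm, (single_one_ne_zero j).symm]
  · intro y z h _
    rcases add_eq_single_one_iff.mp h with ⟨rfl, rfl⟩ | ⟨rfl, rfl⟩ <;> simp

lemma convOn_nonneg (ha : ∀ x, 0 ≤ a x) (hb : ∀ x, 0 ≤ b x) (x : Fin J → ℕ) :
    0 ≤ convOn a b x :=
  tsum_nonneg fun y => tsum_nonneg fun z => by
    split_ifs
    exacts [mul_nonneg (ha y) (hb z), le_rfl]

lemma support_convOn_subset :
    support (convOn a b) ⊆ support a + support b := by
  intro x hx
  obtain ⟨y, hy⟩ : ∃ y, ∑' z, (if y + z = x then a y * b z else 0) ≠ 0 := by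
    by_contra! h
    exact hx (by simp [convOn, h])
  obtain ⟨z, hz⟩ : ∃ z, (if y + z = x then a y * b z else 0) ≠ 0 := by
    by_contra! h
    exact hy (by simp [h])
  rw [ne_eq, ite_eq_right_iff, Classical.not_imp, mul_eq_zero, not_or] at hz
  exact Set.mem_add.mpr ⟨y, hz.2.1, z, hz.2.2, hz.1⟩

lemma tsum_convOn (ha : (support a).Finite) (hb : (support b).Finite) :
    ∑' x, convOn a b x = (∑' x, a x) * ∑' x, b x := by
  have hterm : ∀ y z, HasSum (fun x => if y + z = x then a y * b z else 0) (a y * b z) :=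
    fun y z => by simpa only [eq_comm] using hasSum_ite_eq (y + z) (a y * b z)
  have hconv : HasSum (convOn a b) (∑ y ∈ ha.toFinset, ∑ z ∈ hb.toFinset, a y * b z) := by
    convert hasSum_sum fun y _ => hasSum_sum fun z _ => hterm y z using 1
    funext x
    exact convOn_eq_sum fun y z _ h => by simpa using mul_ne_zero_iff.mp h
  rw [hconv.tsum_eq, ← sum_mul_sum, tsum_eq_sum' ha.coe_toFinset.symm.subset,
    tsum_eq_sum' hb.coe_toFinset.symm.subset]

end Conv

section SelPow

variable {J : ℕ}

lemma selPow_succ (p : Fin J → ℝ) (k : ℕ) : selPow p (k + 1) = convOn (selPow p k) (sel p) :=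
  rfl

lemma selPow_apply_zero (p : Fin J → ℝ) (k : ℕ) : selPow p k 0 = (1 - ∑ j, p j) ^ k := by
  induction k with
  | zero => simp [selPow]
  | succ k ih => rw [selPow_succ, convOn_zero, ih, sel_zero, pow_succ]

lemma selPow_apply_single (p : Fin J → ℝ) (k : ℕ) (j : Fin J) :
    selPow p k (Pi.single j 1) = k * p j * (1 - ∑ i, p i) ^ (k - 1) := by
  induction k with
  | zero => simp [selPow]
  | succ k ih =>
    rw [selPow_succ, convOn_single, selPow_apply_zero, ih, sel_single, sel_zero]
    rcases k with _ | k
    · simp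
    · simp only [Nat.add_sub_cancel]
      push_cast
      ring

lemma selPow_nonneg {p : Fin J → ℝ} (hp : ∀ j, 0 ≤ p j) (hs : ∑ j, p j ≤ 1) (k : ℕ)
    (x : Fin J → ℕ) : 0 ≤ selPow p k x := by
  induction k generalizing x with
  | zero => simp only [selPow]; split_ifs <;> norm_num
  | succ k ih => exact convOn_nonneg ih (sel_nonneg hp hs) x

lemma finite_support_selPow (p : Fin J → ℝ) (k : ℕ) : (support (selPow p k)).Finite := by
  induction k with
  | zero => exact (Set.finite_singleton 0).subset fun x hx => by by_contra h; simp_all [selPow]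
  | succ k ih => exact (ih.add (finite_support_sel p)).subset support_convOn_subset

lemma tsum_selPow (p : Fin J → ℝ) (k : ℕ) : ∑' x, selPow p k x = 1 := by
  induction k with
  | zero => simp [selPow]
  | succ k ih => rw [selPow_succ, tsum_convOn (finite_support_selPow p k) (finite_support_sel p),
      ih, tsum_sel, one_mul]

end SelPow

theorem tsum_abs_sel_sub_selPow_le {J m : ℕ} (hm : 1 ≤ m) {p : Fin J → ℝ} (hp : ∀ j, 0 ≤ p j)
    (hs : ∑ j, p j ≤ 1) :
    ∑' x, |sel p x - selPow (fun j => p j / m) m x| ≤ 2 * (∑ j, p j) ^ 2 := by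
  set s := ∑ j, p j
  set g := selPow (fun j => p j / m) m
  have hs0 : 0 ≤ s := sum_nonneg fun j _ => hp j
  have hsm : s ≤ m := hs.trans (by exact_mod_cast hm)
  have hsum_div : ∑ j, p j / m = s / m := (sum_div _ _ _).symm
  have hg_nonneg : ∀ x, 0 ≤ g x := selPow_nonneg (fun j => div_nonneg (hp j) m.cast_nonneg)
    (by rw [hsum_div]; exact div_le_one_of_le₀ hsm m.cast_nonneg) m
  have hsupp : support (fun x => (sel p x - g x)⁺) ⊆ selSupport J := fun x hx => by
    by_contra hx'
    have hsel : sel p x = 0 := notMem_support.mp fun h => hx' (support_sel_subset p h)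
    exact hx (posPart_eq_zero.mpr (by linarith [hg_nonneg x]))
  have hg0 : g 0 = (1 - s / m) ^ m := by rw [← hsum_div]; exact selPow_apply_zero _ m
  have hgj : ∀ j, g (Pi.single j 1) = p j * (1 - s / m) ^ (m - 1) := fun j =>
    (selPow_apply_single _ m j).trans <| by
      rw [hsum_div, mul_div_cancel₀ _ (Nat.cast_ne_zero.mpr (by omega))]
  have hzero : (sel p 0 - g 0)⁺ = 0 := by
    rw [posPart_eq_zero, sel_zero, hg0]
    linarith [one_sub_le_one_sub_div_pow hs0 hsm le_rfl]
  have hsingle : ∀ j, (sel p (Pi.single j 1) - g (Pi.single j 1))⁺ ≤ p j * s := fun j => by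
    rw [posPart_def, sel_single, hgj]
    refine sup_le ?_ (mul_nonneg (hp j) hs0)
    nlinarith [one_sub_le_one_sub_div_pow hs0 hsm (Nat.sub_le m 1), hp j]
  rw [tsum_abs_sub_eq_two_mul_tsum_posPart (summable_of_hasFiniteSupport (finite_support_sel p))
    (summable_of_hasFiniteSupport (finite_support_selPow _ m)) (by rw [tsum_sel, tsum_selPow]),
    tsum_eq_sum' hsupp, sum_selSupport, hzero, zero_add, sq, sum_mul]
  gcongr with j
  exact hsingle j

/-- If `ρ` is a probability distribution on `[r]` and each `q u` is a subprobability
vector on `[J]`, then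
`d_TV(sel(∑_u ρ_u q_{u,·}), ∑_u ρ_u sel^{*m}(q_{u,·}/m)) ≤ ∑_u ρ_u (∑_j q_{u,j})²`. -/
theorem stmt_10 {r J : ℕ} (m : ℕ) (hm : 1 ≤ m)
    (ρ : Fin r → ℝ) (hρ : ∀ u, 0 ≤ ρ u) (hρs : ∑ u, ρ u = 1)
    (q : Fin r → Fin J → ℝ) (hq : ∀ u j, 0 ≤ q u j) (hqs : ∀ u, ∑ j, q u j ≤ 1) :
    (1 / 2) * ∑' x : Fin J → ℕ,
        |sel (fun j => ∑ u, ρ u * q u j) x - ∑ u, ρ u * selPow (fun j => q u j / m) m x|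
      ≤ ∑ u, ρ u * (∑ j, q u j) ^ 2 := by
  have hmix : ∀ x, sel (fun j => ∑ u, ρ u * q u j) x - ∑ u, ρ u * selPow (fun j => q u j / m) m x
      = ∑ u, ρ u * (sel (q u) x - selPow (fun j => q u j / m) m x) := fun x => by
    rw [sel_mixture hρs, ← sum_sub_distrib]
    simp_rw [mul_sub]
  have hsummable : ∀ u ∈ univ, Summable fun x => sel (q u) x - selPow (fun j => q u j / m) m x :=
    fun u _ => (summable_of_hasFiniteSupport (finite_support_sel _)).sub
      (summable_of_hasFiniteSupport (finite_support_selPow _ m))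
  calc (1 / 2) * ∑' x, |sel (fun j => ∑ u, ρ u * q u j) x
          - ∑ u, ρ u * selPow (fun j => q u j / m) m x|
      ≤ (1 / 2) * ∑ u, ρ u * ∑' x, |sel (q u) x - selPow (fun j => q u j / m) m x| := by
        simp_rw [hmix]
        gcongr
        exact tsum_abs_sum_mul_le univ (fun u _ => hρ u) hsummable
    _ ≤ (1 / 2) * ∑ u, ρ u * (2 * (∑ j, q u j) ^ 2) := by
        gcongr with u
        · exact hρ u
        · exact tsum_abs_sel_sub_selPow_le hm (hq u) (hqs u)
    _ = ∑ u, ρ u * (∑ j, q u j) ^ 2 := by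
        rw [mul_sum]
        exact sum_congr rfl fun u _ => by ring
end

section
/- Let y be a positive integer, t ≥ 1, ρ a probability distribution on [r], θ_{u,v} > 0, θ_v* > 0, and θ_v := Σ_u ρ_u θ_{u,v}. Assume θ_{u,v} y / (mt) ≤ 1 for all u, θ_v y / t ≤ 1, and θ_v* y / t ≤ 1. Then d_TV( Σ_u ρ_u binom(m, θ_{u,v} y/(mt)), Ber(θ_v* y / t) ) ≤ θ_max² y² / t² + |θ_v - θ_v*| y / t, where θ_max = max_{u,v} θ_{u,v}. -/
/-!
Route each mixture component through a Bernoulli variable with the same mean: `binom(m, p)` is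
within `2 (mp)²` of `Ber(mp)` in `ℓ¹`, since it puts at least `1 - mp` on `0`, at most `mp` on `1`,
and `mp - mp (1 - p)^(m-1) ≤ (mp)²` by Bernoulli's inequality. A mixture of Bernoulli variables
is again Bernoulli with the averaged parameter, and two Bernoulli variables are `2 |b - q|` apart.
-/

/-- The binomial distribution with `m` trials and success probability `p`. -/
noncomputable def binomPMF (m : ℕ) (p : ℝ) (k : ℕ) : ℝ :=
  if k ≤ m then (Nat.choose m k : ℝ) * p ^ k * (1 - p) ^ (m - k) else 0

/-- The Bernoulli distribution with parameter `q` on `ℕ`. -/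
noncomputable def bern (q : ℝ) (k : ℕ) : ℝ :=
  if k = 0 then 1 - q else if k = 1 then q else 0

open Finset

lemma bern_zero (q : ℝ) : bern q 0 = 1 - q := rfl

lemma bern_one (q : ℝ) : bern q 1 = q := rfl

lemma bern_eq_zero_of_two_le (q : ℝ) {k : ℕ} (hk : 2 ≤ k) : bern q k = 0 := by
  simp [bern, show k ≠ 0 by omega, show k ≠ 1 by omega]

lemma sum_mul_bern {ι : Type*} (s : Finset ι) (ρ : ι → ℝ) (hρs : ∑ u ∈ s, ρ u = 1)
    (a : ι → ℝ) (k : ℕ) : ∑ u ∈ s, ρ u * bern (a u) k = bern (∑ u ∈ s, ρ u * a u) k := by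
  rcases k with _ | _ | k <;> simp [bern, mul_sub, sum_sub_distrib, hρs]

lemma sum_range_abs_bern_sub_bern {n : ℕ} (hn : 2 ≤ n) (b q : ℝ) :
    ∑ k ∈ range n, |bern b k - bern q k| = 2 * |b - q| := by
  obtain ⟨n, rfl⟩ := Nat.exists_eq_add_of_le' hn
  rw [sum_range_succ' _ (n + 1), sum_range_succ',
    sum_eq_zero fun k _ => by simp [bern_eq_zero_of_two_le _ (show 2 ≤ k + 1 + 1 by omega)]]
  simp only [zero_add, bern_zero, bern_one]
  rw [show 1 - b - (1 - q) = -(b - q) by ring, abs_neg]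
  ring

/-- The mass of `f` beyond `1` equals its excess at `0` minus its deficit at `1`, so the distance
is twice the deficit. -/
lemma sum_range_abs_sub_bern {f : ℕ → ℝ} {n : ℕ} {a : ℝ} (hn : 2 ≤ n) (hf : ∀ k, 0 ≤ f k)
    (hsum : ∑ k ∈ range n, f k = 1) (h0 : 1 - a ≤ f 0) (h1 : f 1 ≤ a) :
    ∑ k ∈ range n, |f k - bern a k| = 2 * (a - f 1) := by
  obtain ⟨n, rfl⟩ := Nat.exists_eq_add_of_le' hn
  rw [sum_range_succ' _ (n + 1), sum_range_succ'] at hsum ⊢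
  have htail : ∀ k ∈ range n, |f (k + 1 + 1) - bern a (k + 1 + 1)| = f (k + 1 + 1) := fun k _ => by
    rw [bern_eq_zero_of_two_le _ (by omega), sub_zero, abs_of_nonneg (hf _)]
  rw [sum_congr rfl htail]
  simp only [zero_add, bern_zero, bern_one] at hsum ⊢
  rw [abs_of_nonpos (by linarith), abs_of_nonneg (by linarith)]
  linarith

lemma binomPMF_nonneg (m : ℕ) {p : ℝ} (hp0 : 0 ≤ p) (hp1 : p ≤ 1) (k : ℕ) :
    0 ≤ binomPMF m p k := by
  have : 0 ≤ 1 - p := by linarith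
  unfold binomPMF
  split_ifs <;> positivity

lemma binomPMF_eq_zero_of_lt {m k : ℕ} (p : ℝ) (hk : m < k) : binomPMF m p k = 0 :=
  if_neg (by omega)

lemma sum_range_binomPMF (m : ℕ) (p : ℝ) : ∑ k ∈ range (m + 1), binomPMF m p k = 1 := by
  have h : ∀ k ∈ range (m + 1), binomPMF m p k = p ^ k * (1 - p) ^ (m - k) * m.choose k :=
    fun k hk => by
      rw [binomPMF, if_pos (Nat.lt_succ_iff.mp (mem_range.mp hk))]
      ring
  rw [sum_congr rfl h, ← add_pow, add_sub_cancel, one_pow]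

lemma binomPMF_zero (m : ℕ) (p : ℝ) : binomPMF m p 0 = (1 - p) ^ m := by
  simp [binomPMF]

lemma binomPMF_one {m : ℕ} (hm : 1 ≤ m) (p : ℝ) :
    binomPMF m p 1 = m * p * (1 - p) ^ (m - 1) := by
  simp [binomPMF, hm]

lemma sum_range_abs_binomPMF_sub_bern_le {m : ℕ} (hm : 1 ≤ m) {p : ℝ} (hp0 : 0 ≤ p)
    (hp1 : p ≤ 1) :
    ∑ k ∈ range (m + 1), |binomPMF m p k - bern (m * p) k| ≤ 2 * (m * p) ^ 2 := by
  have hbernoulli : ∀ n : ℕ, 1 - n * p ≤ (1 - p) ^ n := fun n => by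
    simpa [sub_eq_add_neg] using one_add_mul_le_pow (show (-2 : ℝ) ≤ -p by linarith) n
  have h0 : 1 - m * p ≤ binomPMF m p 0 := (binomPMF_zero m p).symm ▸ hbernoulli m
  have hpow : (1 - p) ^ (m - 1) ≤ 1 := pow_le_one₀ (by linarith) (by linarith)
  have hmp : 0 ≤ (m : ℝ) * p := by positivity
  have h1 : binomPMF m p 1 ≤ m * p := by
    rw [binomPMF_one hm]
    exact mul_le_of_le_one_right hmp hpow
  rw [sum_range_abs_sub_bern (by omega) (binomPMF_nonneg m hp0 hp1) (sum_range_binomPMF m p) h0 h1,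
    binomPMF_one hm]
  have hdeficit : 1 - (1 - p) ^ (m - 1) ≤ m * p := by
    have := hbernoulli (m - 1)
    rw [Nat.cast_sub hm, Nat.cast_one] at this
    nlinarith
  nlinarith [mul_le_mul_of_nonneg_left hdeficit hmp]

lemma sum_abs_mixture_sub_le {ι κ : Type*} (s : Finset ι) (K : Finset κ) {ρ : ι → ℝ}
    (hρ : ∀ u ∈ s, 0 ≤ ρ u) (f h : ι → κ → ℝ) (g : κ → ℝ) :
    ∑ k ∈ K, |∑ u ∈ s, ρ u * f u k - g k|
      ≤ ∑ u ∈ s, ρ u * ∑ k ∈ K, |f u k - h u k| + ∑ k ∈ K, |∑ u ∈ s, ρ u * h u k - g k| := by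
  have hpoint : ∀ k ∈ K, |∑ u ∈ s, ρ u * f u k - g k|
      ≤ ∑ u ∈ s, ρ u * |f u k - h u k| + |∑ u ∈ s, ρ u * h u k - g k| := fun k _ => by
    have hsplit : ∑ u ∈ s, ρ u * f u k - g k
        = ∑ u ∈ s, ρ u * (f u k - h u k) + (∑ u ∈ s, ρ u * h u k - g k) := by
      simp only [mul_sub, sum_sub_distrib]
      ring
    rw [hsplit]
    refine (abs_add_le _ _).trans (add_le_add_left ((abs_sum_le_sum_abs _ _).trans_eq ?_) _)
    exact sum_congr rfl fun u hu => by rw [abs_mul, abs_of_nonneg (hρ u hu)]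
  refine (sum_le_sum hpoint).trans_eq ?_
  rw [sum_add_distrib, sum_comm]
  simp only [mul_sum]

lemma sum_mul_le_of_le {ι : Type*} (s : Finset ι) {ρ c : ι → ℝ} {C : ℝ}
    (hρ : ∀ u ∈ s, 0 ≤ ρ u) (hρs : ∑ u ∈ s, ρ u = 1) (hc : ∀ u ∈ s, c u ≤ C) :
    ∑ u ∈ s, ρ u * c u ≤ C :=
  (sum_le_sum fun u hu => mul_le_mul_of_nonneg_left (hc u hu) (hρ u hu)).trans_eq
    (by rw [← sum_mul, hρs, one_mul])

theorem stmt_11_general {r : ℕ} (m y : ℕ) (hm : 1 ≤ m) (t : ℝ) (ht : 1 ≤ t)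
    (ρ : Fin r → ℝ) (hρ : ∀ u, 0 ≤ ρ u) (hρs : ∑ u, ρ u = 1)
    (θ : Fin r → Fin r → ℝ) (hθ : ∀ u w, 0 < θ u w)
    (θstar : Fin r → ℝ)
    (θmax : ℝ) (hθmax : ∀ u w, θ u w ≤ θmax)
    (v : Fin r)
    (h1 : ∀ u, θ u v * y / (m * t) ≤ 1) :
    (1 / 2) * ∑' k : ℕ,
        |(∑ u, ρ u * binomPMF m (θ u v * y / (m * t)) k) - bern (θstar v * y / t) k|
      ≤ θmax ^ 2 * (y : ℝ) ^ 2 / t ^ 2 + |(∑ u, ρ u * θ u v) - θstar v| * y / t := by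
  have ht0 : 0 < t := one_pos.trans_le ht
  have hmean : ∀ u, (m : ℝ) * (θ u v * y / (m * t)) = θ u v * y / t := fun u => by
    field_simp [show (m : ℝ) ≠ 0 by positivity]
  have hcomponent : ∀ u ∈ univ, ∑ k ∈ range (m + 1),
      |binomPMF m (θ u v * y / (m * t)) k - bern (θ u v * y / t) k|
        ≤ 2 * (θmax * y / t) ^ 2 := fun u _ => by
    have := (hθ u v).le
    refine (hmean u ▸ sum_range_abs_binomPMF_sub_bern_le hm (by positivity) (h1 u)).trans ?_
    gcongr
    exact hθmax u v
  have hmixture : ∑ u, ρ u * (θ u v * y / t) = (∑ u, ρ u * θ u v) * y / t := by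
    simp only [sum_mul, sum_div, mul_assoc, mul_div_assoc]
  rw [tsum_eq_sum (s := range (m + 1)) fun k hk => by
    simp [binomPMF_eq_zero_of_lt _ (show m < k by simpa using hk),
      bern_eq_zero_of_two_le _ (show 2 ≤ k by simp at hk; omega)]]
  have htriangle := sum_abs_mixture_sub_le univ (range (m + 1)) (fun u _ => hρ u)
    (fun u => binomPMF m (θ u v * y / (m * t))) (fun u => bern (θ u v * y / t))
    (bern (θstar v * y / t))
  simp only [sum_mul_bern _ _ hρs] at htriangle
  rw [hmixture, sum_range_abs_bern_sub_bern (by omega), ← sub_div,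
    ← sub_mul, abs_div, abs_mul, Nat.abs_cast, abs_of_pos ht0] at htriangle
  have hweighted := sum_mul_le_of_le univ (fun u _ => hρ u) hρs hcomponent
  linarith [show θmax ^ 2 * (y : ℝ) ^ 2 / t ^ 2 = (θmax * y / t) ^ 2 by ring]

/-- Bound on the total variation distance between a mixture of binomial distributions
`∑_u ρ_u binom(m, θ_{u,v} y/(mt))` and `Ber(θ*_v y/t)`. -/
theorem stmt_11 {r : ℕ} (m y : ℕ) (hm : 1 ≤ m) (hy : 0 < y) (t : ℝ) (ht : 1 ≤ t)
    (ρ : Fin r → ℝ) (hρ : ∀ u, 0 ≤ ρ u) (hρs : ∑ u, ρ u = 1)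
    (θ : Fin r → Fin r → ℝ) (hθ : ∀ u w, 0 < θ u w)
    (θstar : Fin r → ℝ) (hθstar : ∀ w, 0 < θstar w)
    (θmax : ℝ) (hθmax : ∀ u w, θ u w ≤ θmax)
    (v : Fin r)
    (h1 : ∀ u, θ u v * y / (m * t) ≤ 1)
    (h2 : (∑ u, ρ u * θ u v) * y / t ≤ 1)
    (h3 : θstar v * y / t ≤ 1) :
    (1 / 2) * ∑' k : ℕ,
        |(∑ u, ρ u * binomPMF m (θ u v * y / (m * t)) k) - bern (θstar v * y / t) k|
      ≤ θmax ^ 2 * (y : ℝ) ^ 2 / t ^ 2 + |(∑ u, ρ u * θ u v) - θstar v| * y / t :=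
  stmt_11_general m y hm t ht ρ hρ hρs θ hθ θstar θmax hθmax v h1
end
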